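/- arXiv:2101.05200 — 2 statements merged into one kernel-verified Lean document; each statement's English description precedes it below -/
import Mathlib

section
/- Let N_std, N_all : (0,1) × ℕ → ℕ satisfy N_std(ε, d) ≤ C_ω·(N_all(ε/4, d) + 1)^{1+ω} for some ω > 0, C_ω ≥ 1 and all ε, d. If N_all is strongly polynomially tractable with exponent p (i.e., for every ε' > 0 there is C with N_all(ε,d) ≤ C·ε^{-(p+ε')} for all d, ε), then N_std is strongly polynomially tractable, and its exponent equals p whenever additionally N_all(ε,d) ≤ N_std(ε,d) for all ε, d. -/
/-!
For every `q > p` pick `s` strictly between `p` and `q` and `ω` with `s (1 + ω) = q`. Feeding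
`N_all (ε / 4, d) ≲ ε ^ (-s)` into the comparison inequality with this `ω` bounds `N_std (ε, d)`
by a multiple of `ε ^ (-q)`, so every `q > p` is an SPT exponent of `N_std`. Conversely
`N_all ≤ N_std` makes every SPT exponent of `N_std` one of `N_all`, hence at least `p`.
-/

/-- The set of admissible exponents of strong polynomial tractability of `N`. -/
def sptExponents (N : ℝ → ℕ → ℕ) : Set ℝ :=
  {p' : ℝ | 0 ≤ p' ∧ ∃ C : ℝ, 0 < C ∧
    ∀ ε ∈ Set.Ioo (0 : ℝ) 1, ∀ d : ℕ, 0 < d → (N ε d : ℝ) ≤ C * ε ^ (-p')}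

open Set

lemma sptExponents_bddBelow (N : ℝ → ℕ → ℕ) : BddBelow (sptExponents N) :=
  ⟨0, fun _ hq => hq.1⟩

lemma sptExponents_anti {N M : ℝ → ℕ → ℕ}
    (hle : ∀ ε ∈ Ioo (0 : ℝ) 1, ∀ d : ℕ, 0 < d → N ε d ≤ M ε d) :
    sptExponents M ⊆ sptExponents N := by
  rintro q ⟨hq, C, hC, hM⟩
  exact ⟨hq, C, hC, fun ε hε d hd => (Nat.cast_le.mpr (hle ε hε d hd)).trans (hM ε hε d hd)⟩

lemma add_one_le_of_le_mul_rpow_neg {N : ℝ → ℕ → ℕ} {C s : ℝ} (hs : 0 ≤ s)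
    (hN : ∀ ε ∈ Ioo (0 : ℝ) 1, ∀ d : ℕ, 0 < d → (N ε d : ℝ) ≤ C * ε ^ (-s))
    {ε : ℝ} (hε : ε ∈ Ioo (0 : ℝ) 1) {d : ℕ} (hd : 0 < d) :
    (N (ε / 4) d : ℝ) + 1 ≤ (C * 4 ^ s + 1) * ε ^ (-s) := by
  have hε4 : ε / 4 ∈ Ioo (0 : ℝ) 1 := ⟨by linarith [hε.1], by linarith [hε.2]⟩
  have hscale : (ε / 4) ^ (-s) = 4 ^ s * ε ^ (-s) := by
    rw [Real.div_rpow hε.1.le (by norm_num), Real.rpow_neg (by norm_num : (0 : ℝ) ≤ 4),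
      div_inv_eq_mul, mul_comm]
  have hone : 1 ≤ ε ^ (-s) :=
    Real.one_le_rpow_of_pos_of_le_one_of_nonpos hε.1 hε.2.le (neg_nonpos.mpr hs)
  calc (N (ε / 4) d : ℝ) + 1 ≤ C * 4 ^ s * ε ^ (-s) + ε ^ (-s) := by
        rw [mul_assoc, ← hscale]
        exact add_le_add (hN _ hε4 d hd) hone
    _ = (C * 4 ^ s + 1) * ε ^ (-s) := by ring

lemma mul_one_add_mem_sptExponents {N_std N_all : ℝ → ℕ → ℕ} {ω Cω C s : ℝ}
    (hω : 0 ≤ ω) (hCω : 0 < Cω) (hC : 0 ≤ C) (hs : 0 ≤ s)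
    (hcomp : ∀ ε ∈ Ioo (0 : ℝ) 1, ∀ d : ℕ, 0 < d →
      (N_std ε d : ℝ) ≤ Cω * ((N_all (ε / 4) d : ℝ) + 1) ^ (1 + ω))
    (hall : ∀ ε ∈ Ioo (0 : ℝ) 1, ∀ d : ℕ, 0 < d → (N_all ε d : ℝ) ≤ C * ε ^ (-s)) :
    s * (1 + ω) ∈ sptExponents N_std := by
  have hbase : 0 < C * 4 ^ s + 1 :=
    add_pos_of_nonneg_of_pos (mul_nonneg hC (by positivity)) one_pos
  refine ⟨by positivity, Cω * (C * 4 ^ s + 1) ^ (1 + ω), by positivity, fun ε hε d hd => ?_⟩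
  calc (N_std ε d : ℝ) ≤ Cω * ((N_all (ε / 4) d : ℝ) + 1) ^ (1 + ω) := hcomp ε hε d hd
    _ ≤ Cω * ((C * 4 ^ s + 1) * ε ^ (-s)) ^ (1 + ω) := by
        gcongr
        exact add_one_le_of_le_mul_rpow_neg hs hall hε hd
    _ = Cω * (C * 4 ^ s + 1) ^ (1 + ω) * ε ^ (-(s * (1 + ω))) := by
        rw [Real.mul_rpow hbase.le (Real.rpow_nonneg hε.1.le _), ← Real.rpow_mul hε.1.le, neg_mul,
          mul_assoc]

lemma mem_sptExponents_of_lt {N_std N_all : ℝ → ℕ → ℕ}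
    (hcomp : ∀ ω : ℝ, 0 < ω → ∃ Cω : ℝ, 1 ≤ Cω ∧
      ∀ ε ∈ Ioo (0 : ℝ) 1, ∀ d : ℕ, 0 < d →
        (N_std ε d : ℝ) ≤ Cω * ((N_all (ε / 4) d : ℝ) + 1) ^ (1 + ω))
    {p : ℝ} (hp : 0 ≤ p)
    (hall : ∀ ε' : ℝ, 0 < ε' → ∃ C : ℝ, 0 < C ∧
      ∀ ε ∈ Ioo (0 : ℝ) 1, ∀ d : ℕ, 0 < d → (N_all ε d : ℝ) ≤ C * ε ^ (-(p + ε')))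
    {q : ℝ} (hq : p < q) : q ∈ sptExponents N_std := by
  obtain ⟨s, hps, hsq⟩ := exists_between hq
  have hs : 0 < s := hp.trans_lt hps
  obtain ⟨Cω, hCω, hstd⟩ := hcomp ((q - s) / s) (div_pos (by linarith) hs)
  obtain ⟨C, hC, hall_s⟩ := hall (s - p) (by linarith)
  have hq_eq : s * (1 + (q - s) / s) = q := by field_simp; ring
  rw [← hq_eq]
  exact mul_one_add_mem_sptExponents (div_pos (by linarith) hs).le (by linarith) hC.le hs.le
    hstd (by simpa only [add_sub_cancel] using hall_s)

theorem stmt_12 (N_std N_all : ℝ → ℕ → ℕ)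
    (hcomp : ∀ ω : ℝ, 0 < ω → ∃ Cω : ℝ, 1 ≤ Cω ∧
      ∀ ε ∈ Set.Ioo (0 : ℝ) 1, ∀ d : ℕ, 0 < d →
        (N_std ε d : ℝ) ≤ Cω * ((N_all (ε / 4) d : ℝ) + 1) ^ (1 + ω))
    (p : ℝ) (hp : 0 ≤ p)
    (hall : ∀ ε' : ℝ, 0 < ε' → ∃ C : ℝ, 0 < C ∧
      ∀ ε ∈ Set.Ioo (0 : ℝ) 1, ∀ d : ℕ, 0 < d → (N_all ε d : ℝ) ≤ C * ε ^ (-(p + ε'))) :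
    (sptExponents N_std).Nonempty ∧
    ((∀ ε ∈ Set.Ioo (0 : ℝ) 1, ∀ d : ℕ, 0 < d → N_all ε d ≤ N_std ε d) →
      p = sInf (sptExponents N_all) → sInf (sptExponents N_std) = p) := by
  have hlt : ∀ q, p < q → q ∈ sptExponents N_std := fun q hq =>
    mem_sptExponents_of_lt hcomp hp hall hq
  have hne : (sptExponents N_std).Nonempty := ⟨p + 1, hlt _ (lt_add_one p)⟩
  refine ⟨hne, fun hle hpall => csInf_eq_of_forall_ge_of_forall_gt_exists_lt hne ?_ ?_⟩
  · intro q hq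
    rw [hpall]
    exact csInf_le (sptExponents_bddBelow N_all) (sptExponents_anti hle hq)
  · exact fun w hw => ⟨(p + w) / 2, hlt _ (by linarith), by linarith⟩
end

section
/- Let N_std, N_all : (0,1) × ℕ → ℕ, and suppose that for all sufficiently small ω, δ > 0 there is C_{ω,δ} ≥ 1 with N_std(ε, d) ≤ C_{ω,δ}·(N_all(ε/A_δ, d) + 1)^{1+ω} for all ε ∈ (0, A_δ·1) with ε/A_δ ∈ (0,1) and d ∈ ℕ, where A_δ = (1 + 1/(12 ln(1/δ)))^{1/2}(1-δ)^{-1/2}. If N_all is quasi-polynomially tractable, i.e., N_all(ε, d) ≤ C·exp(t(1 + ln d)(1 + ln ε^{-1})) for some C ≥ 1, t ≥ 0 and all d, ε, then N_std(ε, d) ≤ C'·exp(t*·(1 + ln d)(1 + ln ε^{-1})) with t* = (1+ω)(1 + ln A_δ)·t and some constant C' depending on C, ω, δ. -/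
noncomputable def Adelta (δ : ℝ) : ℝ :=
  Real.sqrt (1 + 1 / (12 * Real.log (1 / δ))) * (Real.sqrt (1 - δ))⁻¹

/-! Feed the quasi-polynomial bound for `N_all` at `ε / A` into the comparison, using
`1 + ln A + ln ε⁻¹ ≤ (1 + ln A)(1 + ln ε⁻¹)` for `A ≥ 1`. The comparison is applied not at the
given `(ω, δ)` but at `(ω / 2, δ')` with `δ'` so small that `A_δ'` is close to `1`: the slack
`(1 + ω / 2)(1 + ln A_δ') ≤ 1 + ω` absorbs the change, and `δ' < 1` avoids the junk value
`A_δ = 0` for `δ ≥ 1`. -/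

open Filter Topology Real Set

lemma one_le_Adelta {δ : ℝ} (hδ₀ : 0 < δ) (hδ₁ : δ < 1) : 1 ≤ Adelta δ := by
  have hlog : 0 < log (1 / δ) := log_pos (one_lt_one_div hδ₀ hδ₁)
  have hnum : 1 ≤ √(1 + 1 / (12 * log (1 / δ))) :=
    one_le_sqrt.mpr (le_add_of_nonneg_right (by positivity))
  have hden : 1 ≤ (√(1 - δ))⁻¹ :=
    one_le_inv₀ (sqrt_pos.mpr (by linarith)) |>.mpr (sqrt_le_one.mpr (by linarith))
  exact (one_mul (1 : ℝ)).ge.trans (mul_le_mul hnum hden zero_le_one (by positivity))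

lemma log_Adelta_nonneg {δ : ℝ} (hδ : 0 < δ) : 0 ≤ log (Adelta δ) := by
  rcases lt_or_ge δ 1 with hδ₁ | hδ₁
  · exact log_nonneg (one_le_Adelta hδ hδ₁)
  · simp [Adelta, sqrt_eq_zero'.mpr (sub_nonpos.mpr hδ₁)]

lemma tendsto_Adelta_nhdsGT_zero : Tendsto Adelta (𝓝[>] 0) (𝓝 1) := by
  have hlog : Tendsto (fun δ : ℝ => 12 * log (1 / δ)) (𝓝[>] 0) atTop := by
    simp_rw [one_div]
    exact (tendsto_log_atTop.comp tendsto_inv_nhdsGT_zero).const_mul_atTop (by norm_num)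
  have hnum : Tendsto (fun δ : ℝ => √(1 + 1 / (12 * log (1 / δ)))) (𝓝[>] 0) (𝓝 1) := by
    have := ((tendsto_const_nhds (x := (1 : ℝ))).add hlog.inv_tendsto_atTop).sqrt
    simpa only [one_div, Pi.inv_apply, add_zero, sqrt_one] using this
  have hden : Tendsto (fun δ : ℝ => (√(1 - δ))⁻¹) (𝓝[>] 0) (𝓝 1) := by
    have : ContinuousAt (fun δ : ℝ => (√(1 - δ))⁻¹) 0 := by fun_prop (disch := simp)
    simpa using this.tendsto.mono_left nhdsWithin_le_nhds
  exact (mul_one (1 : ℝ)) ▸ hnum.mul hden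

lemma exists_one_add_half_mul_one_add_log_Adelta_le {ω δ₀ : ℝ} (hω : 0 < ω) (hδ₀ : 0 < δ₀) :
    ∃ δ ∈ Ioo 0 (min δ₀ 1), (1 + ω / 2) * (1 + log (Adelta δ)) ≤ 1 + ω := by
  have hlim : Tendsto (fun δ => (1 + ω / 2) * (1 + log (Adelta δ))) (𝓝[>] 0)
      (𝓝 ((1 + ω / 2) * (1 + log 1))) :=
    ((tendsto_Adelta_nhdsGT_zero.log one_ne_zero).const_add 1).const_mul _
  have hgap : (1 + ω / 2) * (1 + log 1) < 1 + ω := by simp; linarith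
  obtain ⟨δ, hle, hδ⟩ :=
    ((hlim.eventually (ge_mem_nhds hgap)).and (Ioo_mem_nhdsGT (lt_min hδ₀ one_pos))).exists
  exact ⟨δ, hδ, hle⟩

lemma one_add_log_inv_div_le {A ε : ℝ} (hA : 1 ≤ A) (hε₀ : 0 < ε) (hε₁ : ε ≤ 1) :
    1 + log (ε / A)⁻¹ ≤ (1 + log A) * (1 + log ε⁻¹) := by
  have hlogA : 0 ≤ log A := log_nonneg hA
  have hlogε : 0 ≤ log ε⁻¹ := log_nonneg (one_le_inv₀ hε₀ |>.mpr hε₁)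
  rw [inv_div, log_div (by positivity) hε₀.ne', log_inv] at *
  nlinarith

lemma add_one_rpow_le {n C E p : ℝ} (hn₀ : 0 ≤ n) (hn : n ≤ C * exp E) (hC : 1 ≤ C)
    (hE : 0 ≤ E) (hp : 0 ≤ p) : (n + 1) ^ p ≤ (2 * C) ^ p * exp (p * E) := by
  have hCE : 1 ≤ C * exp E := one_le_mul_of_one_le_of_one_le hC (one_le_exp hE)
  calc (n + 1) ^ p ≤ (2 * C * exp E) ^ p := by gcongr; linarith
    _ = (2 * C) ^ p * exp (p * E) := by
      rw [mul_rpow (by positivity) (exp_pos E).le, ← exp_mul, mul_comm E]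

lemma add_one_rpow_le_of_le_qpt_bound {n C t A ε d p : ℝ} (hn₀ : 0 ≤ n)
    (hn : n ≤ C * exp (t * (1 + log d) * (1 + log (ε / A)⁻¹))) (hC : 1 ≤ C) (ht : 0 ≤ t)
    (hA : 1 ≤ A) (hε₀ : 0 < ε) (hε₁ : ε ≤ 1) (hd : 1 ≤ d) (hp : 0 ≤ p) :
    (n + 1) ^ p ≤ (2 * C) ^ p * exp (p * (1 + log A) * t * (1 + log d) * (1 + log ε⁻¹)) := by
  have hlogA : 0 ≤ log A := log_nonneg hA
  have hlogd : 0 ≤ log d := log_nonneg hd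
  have hlogε : 0 ≤ log ε⁻¹ := log_nonneg (one_le_inv₀ hε₀ |>.mpr hε₁)
  have hn' : n ≤ C * exp (t * (1 + log d) * ((1 + log A) * (1 + log ε⁻¹))) := by
    refine hn.trans ?_
    gcongr
    exact one_add_log_inv_div_le hA hε₀ hε₁
  convert add_one_rpow_le hn₀ hn' hC (by positivity) hp using 3
  ring

theorem stmt_16_general (N_std N_all : ℝ → ℕ → ℕ) (ω₀ δ₀ : ℝ) (hδ₀ : 0 < δ₀)
    (hcomp : ∀ ω ∈ Set.Ioo (0 : ℝ) ω₀, ∀ δ ∈ Set.Ioo (0 : ℝ) δ₀, ∃ Cωδ : ℝ, 1 ≤ Cωδ ∧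
      ∀ ε ∈ Set.Ioo (0 : ℝ) 1, ε / Adelta δ ∈ Set.Ioo (0 : ℝ) 1 → ∀ d : ℕ, 0 < d →
        (N_std ε d : ℝ) ≤ Cωδ * ((N_all (ε / Adelta δ) d : ℝ) + 1) ^ (1 + ω))
    (C t : ℝ) (hC : 1 ≤ C) (ht : 0 ≤ t)
    (hall : ∀ ε ∈ Set.Ioo (0 : ℝ) 1, ∀ d : ℕ, 0 < d →
      (N_all ε d : ℝ) ≤ C * Real.exp (t * (1 + Real.log d) * (1 + Real.log ε⁻¹))) :
    ∀ ω ∈ Set.Ioo (0 : ℝ) ω₀, ∀ δ ∈ Set.Ioo (0 : ℝ) δ₀, ∃ C' : ℝ, 0 < C' ∧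
      ∀ ε ∈ Set.Ioo (0 : ℝ) 1, ∀ d : ℕ, 0 < d →
        (N_std ε d : ℝ) ≤ C' * Real.exp ((1 + ω) * (1 + Real.log (Adelta δ)) * t *
          (1 + Real.log d) * (1 + Real.log ε⁻¹)) := by
  rintro ω ⟨hω, hωω₀⟩ δ ⟨hδ, -⟩
  obtain ⟨δ', ⟨hδ'₀, hδ'⟩, hexp⟩ := exists_one_add_half_mul_one_add_log_Adelta_le hω hδ₀
  have hA : 1 ≤ Adelta δ' := one_le_Adelta hδ'₀ (hδ'.trans_le (min_le_right _ _))
  have hexp' : (1 + ω / 2) * (1 + log (Adelta δ')) ≤ (1 + ω) * (1 + log (Adelta δ)) :=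
    hexp.trans <|
      le_mul_of_one_le_right (by linarith) (le_add_of_nonneg_right (log_Adelta_nonneg hδ))
  obtain ⟨C₁, hC₁, hstd⟩ :=
    hcomp (ω / 2) ⟨by linarith, by linarith⟩ δ' ⟨hδ'₀, hδ'.trans_le (min_le_left _ _)⟩
  refine ⟨C₁ * (2 * C) ^ (1 + ω / 2), by positivity, fun ε ⟨hε₀, hε₁⟩ d hd => ?_⟩
  have hεA : ε / Adelta δ' ∈ Ioo 0 1 :=
    ⟨by positivity, (div_lt_one (by linarith)).mpr (by linarith)⟩
  have hd' : (1 : ℝ) ≤ d := by exact_mod_cast hd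
  calc (N_std ε d : ℝ)
      ≤ C₁ * ((N_all (ε / Adelta δ') d : ℝ) + 1) ^ (1 + ω / 2) := hstd ε ⟨hε₀, hε₁⟩ hεA d hd
    _ ≤ C₁ * ((2 * C) ^ (1 + ω / 2) * exp ((1 + ω / 2) * (1 + log (Adelta δ')) * t *
          (1 + log d) * (1 + log ε⁻¹))) := by
      gcongr
      exact add_one_rpow_le_of_le_qpt_bound (by positivity) (hall _ hεA d hd) hC ht hA hε₀ hε₁.le
        hd' (by linarith)
    _ ≤ C₁ * (2 * C) ^ (1 + ω / 2) * exp ((1 + ω) * (1 + log (Adelta δ)) * t *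
          (1 + log d) * (1 + log ε⁻¹)) := by
      rw [← mul_assoc]
      gcongr _ * exp (?_ * _ * _ * _)
      exact add_nonneg zero_le_one (log_nonneg (one_le_inv₀ hε₀ |>.mpr hε₁.le))

theorem stmt_16 (N_std N_all : ℝ → ℕ → ℕ) (ω₀ δ₀ : ℝ) (hω₀ : 0 < ω₀) (hδ₀ : 0 < δ₀)
    (hcomp : ∀ ω ∈ Set.Ioo (0 : ℝ) ω₀, ∀ δ ∈ Set.Ioo (0 : ℝ) δ₀, ∃ Cωδ : ℝ, 1 ≤ Cωδ ∧
      ∀ ε ∈ Set.Ioo (0 : ℝ) 1, ε / Adelta δ ∈ Set.Ioo (0 : ℝ) 1 → ∀ d : ℕ, 0 < d →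
        (N_std ε d : ℝ) ≤ Cωδ * ((N_all (ε / Adelta δ) d : ℝ) + 1) ^ (1 + ω))
    (C t : ℝ) (hC : 1 ≤ C) (ht : 0 ≤ t)
    (hall : ∀ ε ∈ Set.Ioo (0 : ℝ) 1, ∀ d : ℕ, 0 < d →
      (N_all ε d : ℝ) ≤ C * Real.exp (t * (1 + Real.log d) * (1 + Real.log ε⁻¹))) :
    ∀ ω ∈ Set.Ioo (0 : ℝ) ω₀, ∀ δ ∈ Set.Ioo (0 : ℝ) δ₀, ∃ C' : ℝ, 0 < C' ∧
      ∀ ε ∈ Set.Ioo (0 : ℝ) 1, ∀ d : ℕ, 0 < d →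
        (N_std ε d : ℝ) ≤ C' * Real.exp ((1 + ω) * (1 + Real.log (Adelta δ)) * t *
          (1 + Real.log d) * (1 + Real.log ε⁻¹)) :=
  stmt_16_general N_std N_all ω₀ δ₀ hδ₀ hcomp C t hC ht hall
end
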